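/- Let S be a set of strings each of length ℓ, let g be a common superstring of S, and suppose g contains a repeat r of length > 2ℓ − 2 (occurring at two distinct positions). Write r = xyz with |x| = |z| = ℓ − 1 and |y| ≥ 1, and let g' be obtained from g by replacing the second occurrence of r with xz. Then g' is also a common superstring of S. -/
import Mathlib


/-- `r` occurs in `g` starting at position `i`. -/
def OccursAt {α : Type*} (r g : List α) (i : ℕ) : Prop :=
  i + r.length ≤ g.length ∧ (g.drop i).take r.length = r

lemma occursAt_isInfix {α : Type*} {s g : List α} {p : ℕ} (h : OccursAt s g p) :
    s <:+: g := by
  rw [← h.2]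
  exact (List.take_prefix _ _).isInfix.trans (List.drop_suffix _ _).isInfix

lemma exists_occursAt {α : Type*} {s g : List α} (h : s <:+: g) :
    ∃ p, OccursAt s g p := by
  obtain ⟨u, v, huv⟩ := h
  refine ⟨u.length, ?_, ?_⟩
  · rw [← huv]; simp [List.length_append]
  · rw [← huv, List.append_assoc, List.drop_left, List.take_left]

/-- Extract the occurrence of `s` as lying inside an occurrence of `r`. -/
lemma within_of_occursAt {α : Type*} {s r g : List α} {j p : ℕ}
    (hr : OccursAt r g j) (hs : OccursAt s g p) (hjp : j ≤ p)
    (hpr : p + s.length ≤ j + r.length) :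
    (r.drop (p - j)).take s.length = s := by
  have hd : g.drop p = (g.drop j).drop (p - j) := by
    rw [List.drop_drop]; congr 1; omega
  rw [← hr.2, List.drop_take, List.take_take, min_eq_left (by omega), ← hd, hs.2]

/-- Reinsert an occurrence inside `r` at another occurrence of `r`. -/
lemma occursAt_of_within {α : Type*} {s r g : List α} {i q : ℕ}
    (hr : OccursAt r g i) (h : (r.drop q).take s.length = s)
    (hq : q + s.length ≤ r.length) :
    OccursAt s g (i + q) := by
  refine ⟨by have := hr.1; omega, ?_⟩
  have hd : g.drop (i + q) = (g.drop i).drop q := by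
    rw [List.drop_drop]
  have key : ((g.drop i).drop q).take s.length = (r.drop q).take s.length := by
    rw [← hr.2, List.drop_take, List.take_take, min_eq_left (by omega)]
  rw [hd, key, h]

/-- If `g` is a common superstring of a set `S` of strings of length ℓ containing a
repeat `r = x ++ y ++ z` (with `|x| = |z| = ℓ - 1`, `|y| ≥ 1`) at two distinct
positions `i < j`, then deleting `y` from the second occurrence yields another
common superstring of `S`. -/
theorem delete_repeat_common_superstring {α : Type*} (S : Set (List α)) (ℓ : ℕ)
    (hℓ : 1 ≤ ℓ) (hlen : ∀ s ∈ S, s.length = ℓ)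
    (g x y z : List α) (i j : ℕ)
    (hcs : ∀ s ∈ S, s <:+: g)
    (hx : x.length = ℓ - 1) (hz : z.length = ℓ - 1) (hy : 1 ≤ y.length)
    (hij : i < j)
    (hi : OccursAt (x ++ y ++ z) g i) (hj : OccursAt (x ++ y ++ z) g j) :
    ∀ s ∈ S, s <:+: (g.take j ++ x ++ z ++ g.drop (j + (x ++ y ++ z).length)) := by
  set r : List α := x ++ y ++ z with hr
  have hrl : r.length = x.length + y.length + z.length := by simp [hr]; omega; try omega
  have hjg : j + r.length ≤ g.length := hj.1
  -- The new string equals `g` with the interval `[j+|x|, j+|x|+|y|)` deleted.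
  have hgx : g.take (j + x.length) = g.take j ++ x := by
    rw [List.take_add]
    congr 1
    have : ((g.drop j).take r.length).take x.length = x := by
      rw [hj.2, hr, List.append_assoc, List.take_left]
    rwa [List.take_take, min_eq_left (by omega)] at this
  have hgz : g.drop (j + x.length + y.length) = z ++ g.drop (j + r.length) := by
    have hL : (g.drop (j + x.length + y.length)).take z.length = z := by
      have h1 : ((g.drop j).take r.length).drop (x.length + y.length) = z := by
        rw [hj.2, hr, ← List.length_append, List.drop_left]
      rw [List.drop_take] at h1
      have h2 : r.length - (x.length + y.length) = z.length := by omega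
      rw [h2, List.drop_drop] at h1
      rw [show j + x.length + y.length = j + (x.length + y.length) by omega]
      exact h1
    have hL2 : (g.drop (j + x.length + y.length)).drop z.length
        = g.drop (j + r.length) := by
      rw [List.drop_drop]; congr 1; omega
    rw [← hL, ← hL2, List.take_append_drop]
  have hg' : g.take j ++ x ++ z ++ g.drop (j + r.length)
      = g.take (j + x.length) ++ g.drop (j + x.length + y.length) := by
    rw [hgx, hgz]; simp [List.append_assoc]
  rw [hg']
  intro s hs
  have hsl : s.length = ℓ := hlen s hs
  obtain ⟨p, hp⟩ := exists_occursAt (hcs s hs)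
  clear hcs hs
  induction p using Nat.strong_induction_on with
  | _ p ih =>
    by_cases h1 : p + s.length ≤ j + x.length
    · -- occurrence lies inside the prefix `g.take (j + x.length)`
      have hocc : OccursAt s (g.take (j + x.length)) p := by
        refine ⟨?_, ?_⟩
        · rw [List.length_take]; omega
        · rw [List.drop_take, List.take_take, min_eq_left (by omega)]
          exact hp.2
      exact (occursAt_isInfix hocc).trans (List.prefix_append _ _).isInfix
    · by_cases h2 : j + x.length + y.length ≤ p
      · -- occurrence lies inside the suffix
        have hocc : OccursAt s (g.drop (j + x.length + y.length))
            (p - (j + x.length + y.length)) := by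
          refine ⟨?_, ?_⟩
          · rw [List.length_drop]; have := hp.1; omega
          · rw [List.drop_drop,
              show j + x.length + y.length + (p - (j + x.length + y.length)) = p
                by omega]
            exact hp.2
        exact (occursAt_isInfix hocc).trans (List.suffix_append _ _).isInfix
      · -- occurrence overlaps the deleted part: it lies inside the second copy
        -- of `r`, hence also occurs at a strictly smaller position.
        push_neg at h1 h2
        have hjp : j ≤ p := by omega
        have hpr : p + s.length ≤ j + r.length := by omega
        have hw := within_of_occursAt hj hp hjp hpr
        have hocc := occursAt_of_within hi hw (by omega)
        exact ih (i + (p - j)) (by omega) hocc
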